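/- Every temporary puzzle piece has exactly three resolutions; equivalently, for a temporary puzzle piece with (left, right, bottom) labels (x, y, z), the labels x′, x″, y′, y″, z′, z″ appearing in the definition of a temporary piece are uniquely determined by (x, y, z). -/

import Mathlib

/-!
Only 18 label triples form valid pieces, and a temporary piece
together with its witness labels is read off from the three valid pieces `(x, y', z'')`,
`(x', y'', z)`, `(x'', y, z')` along its sides. Running through all such triples of pieces
lists every temporary piece with its witnesses, and a finite computation shows that no
temporary piece occurs twice in that list.
-/

open scoped Classical

/-- Puzzle labels are encoded as natural numbers; the meaningful ones are
0–7, and 0, 1, 2 are the *simple* labels. -/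
abbrev Label := ℕ

/-- The valid upward triangular puzzle pieces in standard position,
as (left, right, bottom) label triples. -/
def basePieces : List (Label × Label × Label) :=
  [(0,0,0), (1,1,1), (2,2,2), (0,1,3), (1,2,4), (0,2,5), (3,2,6), (0,4,7)]

/-- Valid upward triangular pieces: the base list together with its
120° and 240° rotations. -/
def ValidUp (l r b : Label) : Prop :=
  (l, r, b) ∈ basePieces ∨ (r, b, l) ∈ basePieces ∨ (b, l, r) ∈ basePieces

/-- Valid downward triangular pieces, with (left, right, top) labels:
precisely the rotations (by 60°, 180° or 300°) of valid upward pieces. -/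
def ValidDown (l r t : Label) : Prop := ValidUp r l t

/-- Valid *vertical* equivariant (rhombus) puzzle pieces: opposite sides
carry equal labels, and `ValidEquivVert p q` means that the NW and SE sides
carry `p` while the NE and SW sides carry `q`, where `(p, q)` runs through
the paper's list of label pairs in its fixed orientation. -/
def ValidEquivVert (p q : Label) : Prop :=
  (p, q) ∈ ([(0,1), (1,2), (0,2), (2,3), (0,4), (3,4), (0,6), (2,7)] :
    List (Label × Label))

-- `dedup` matters: pieces such as `(0, 0, 0)` are their own rotations, and a repeated
-- piece would list the same temporary piece twice in `temporaryWitnesses`.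
def validPieces : List (Label × Label × Label) :=
  (basePieces.flatMap fun (l, r, b) => [(l, r, b), (b, l, r), (r, b, l)]).dedup

lemma mem_validPieces_of_validUp {l r b : Label} (h : ValidUp l r b) :
    (l, r, b) ∈ validPieces := by
  simp only [validPieces, List.mem_dedup, List.mem_flatMap, List.mem_cons, List.not_mem_nil,
    or_false, Prod.exists]
  rcases h with h | h | h
  · exact ⟨l, r, b, h, by simp⟩
  · exact ⟨r, b, l, h, by simp⟩
  · exact ⟨b, l, r, h, by simp⟩

def temporaryWitnesses :
    List ((Label × Label × Label) × (Label × Label × Label × Label × Label × Label)) :=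
  validPieces.flatMap fun (x, y', z'') => validPieces.flatMap fun (x', y'', z) =>
    validPieces.filterMap fun (x'', y, z') =>
      if (x', y', z') ∈ validPieces ∧ (x'', y'', z'') ∈ validPieces then
        some ((x, y, z), (x', x'', y', y'', z', z''))
      else none

lemma mem_temporaryWitnesses {x y z x' x'' y' y'' z' z'' : Label}
    (h₁ : ValidUp x y' z'') (h₂ : ValidUp x' y'' z) (h₃ : ValidUp x'' y z')
    (h₄ : ValidUp x' y' z') (h₅ : ValidUp x'' y'' z'') :
    ((x, y, z), (x', x'', y', y'', z', z'')) ∈ temporaryWitnesses := by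
  simp only [temporaryWitnesses, List.mem_flatMap, List.mem_filterMap, Prod.exists]
  refine ⟨x, y', z'', mem_validPieces_of_validUp h₁, x', y'', z, mem_validPieces_of_validUp h₂,
    x'', y, z', mem_validPieces_of_validUp h₃, ?_⟩
  simp [mem_validPieces_of_validUp h₄, mem_validPieces_of_validUp h₅]

lemma temporaryWitnesses_nodup_keys : (temporaryWitnesses.map Prod.fst).Nodup := by
  decide

theorem temp_witnesses_unique (x y z : Label)
    (x₁' x₁'' y₁' y₁'' z₁' z₁'' x₂' x₂'' y₂' y₂'' z₂' z₂'' : Label)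
    (h11 : ValidUp x y₁' z₁'') (h12 : ValidUp x₁' y₁'' z)
    (h13 : ValidUp x₁'' y z₁') (h14 : ValidUp x₁' y₁' z₁')
    (h15 : ValidUp x₁'' y₁'' z₁'')
    (h21 : ValidUp x y₂' z₂'') (h22 : ValidUp x₂' y₂'' z)
    (h23 : ValidUp x₂'' y z₂') (h24 : ValidUp x₂' y₂' z₂')
    (h25 : ValidUp x₂'' y₂'' z₂'') :
    x₁' = x₂' ∧ x₁'' = x₂'' ∧ y₁' = y₂' ∧ y₁'' = y₂'' ∧
      z₁' = z₂' ∧ z₁'' = z₂'' := by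
  have h₁ := mem_temporaryWitnesses h11 h12 h13 h14 h15
  have h₂ := mem_temporaryWitnesses h21 h22 h23 h24 h25
  simpa only [Prod.mk.injEq, true_and] using List.inj_on_of_nodup_map temporaryWitnesses_nodup_keys h₁ h₂ rfl
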